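/- arXiv:math/0407515 — 2 statements merged into one kernel-verified Lean document; each statement's English description precedes it below -/
import Mathlib

section
/- If the groups G(A ⊆ B) and G(A' ⊆ B') are isomorphic, then there is a group isomorphism f: B → B' with f(A) = A'; that is, the embeddings (A ⊆ B) and (A' ⊆ B') are isomorphic as subgroup embeddings. -/
namespace Metabelian

variable {B : Type*} [AddCommGroup B]

/-- The subgroup `A` of `B` is bounded by `n`, i.e. `n • a = 0` for all `a ∈ A`. -/
class BoundedSub (A : AddSubgroup B) (n : ℕ) : Prop where
  bound : ∀ a : A, n • (a : B) = 0

lemma val_smul_eq {n : ℕ} (a : B) (h : n • a = 0) (x : ℕ) : (x % n) • a = x • a := by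
  conv_rhs => rw [← Nat.mod_add_div x n]
  rw [add_nsmul, mul_nsmul, h, smul_zero, add_zero]

/-- Birkhoff's construction `G(A ⊆ B) = (A ⊕ B) ⋊_ψ D` with `D = ℤ/n` where `n` bounds `A`:
the underlying set is `A × B × ℤ/n` and the (multiplicatively written) group operation is
`(a,b,d)·(a',b',d') = (a+a', b + d·ι(a') + b', d+d')`. -/
instance mgroup (A : AddSubgroup B) (n : ℕ) [NeZero n] [BoundedSub A n] :
    Group (A × B × ZMod n) where
  mul x y := (x.1 + y.1, x.2.1 + x.2.2.val • (y.1 : B) + y.2.1, x.2.2 + y.2.2)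
  one := (0, 0, 0)
  inv x := (-x.1, -x.2.1 + x.2.2.val • (x.1 : B), -x.2.2)
  mul_assoc x y z := by
    have hb := BoundedSub.bound (A := A) (n := n)
    refine Prod.ext (add_assoc _ _ _) (Prod.ext ?_ (add_assoc _ _ _))
    show x.2.1 + x.2.2.val • (y.1 : B) + y.2.1 + (x.2.2 + y.2.2).val • (z.1 : B) + z.2.1
        = x.2.1 + x.2.2.val • ((y.1 + z.1 : A) : B) + (y.2.1 + y.2.2.val • (z.1 : B) + z.2.1)
    rw [ZMod.val_add, val_smul_eq _ (hb z.1), AddSubgroup.coe_add, smul_add, add_nsmul]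
    abel
  one_mul x := by
    refine Prod.ext (zero_add _) (Prod.ext ?_ (zero_add _))
    show (0 : B) + (0 : ZMod n).val • (x.1 : B) + x.2.1 = x.2.1
    simp
  mul_one x := by
    refine Prod.ext (add_zero _) (Prod.ext ?_ (add_zero _))
    show x.2.1 + x.2.2.val • ((0 : A) : B) + 0 = x.2.1
    simp
  inv_mul_cancel x := by
    have hb := BoundedSub.bound (A := A) (n := n)
    refine Prod.ext (neg_add_cancel _) (Prod.ext ?_ (neg_add_cancel _))
    show -x.2.1 + x.2.2.val • (x.1 : B) + (-x.2.2).val • (x.1 : B) + x.2.1 = 0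
    have h2 : ((-x.2.2).val + x.2.2.val) % n = 0 := by
      rw [← ZMod.val_add, neg_add_cancel, ZMod.val_zero]
    have h3 : x.2.2.val • (x.1 : B) + (-x.2.2).val • (x.1 : B) = 0 := by
      rw [add_comm, ← add_nsmul, ← val_smul_eq _ (hb x.1), h2, zero_nsmul]
    rw [add_assoc, add_assoc, ← add_assoc (x.2.2.val • (x.1 : B)), h3, zero_add, neg_add_cancel]


section Aux

variable {n : ℕ} [NeZero n] {A : AddSubgroup B} [BoundedSub A n]

lemma mul_def (x y : A × B × ZMod n) :
    x * y = (x.1 + y.1, x.2.1 + x.2.2.val • (y.1 : B) + y.2.1, x.2.2 + y.2.2) := rfl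

lemma central_of (b : B) (y : A × B × ZMod n) :
    ((0 : A), b, (0 : ZMod n)) * y = y * ((0 : A), b, (0 : ZMod n)) := by
  refine Prod.ext ?_ (Prod.ext ?_ ?_) <;>
    simp [mul_def, ZMod.val_zero, add_comm]

lemma central_imp (hn : 1 < n) (hexp : AddMonoid.exponent A = n)
    {x : A × B × ZMod n} (hx : ∀ y, x * y = y * x) : x.1 = 0 ∧ x.2.2 = 0 := by
  haveI : Fact (1 < n) := ⟨hn⟩
  have key : ∀ a : A, x.2.2.val • (a : B) = 0 := by
    intro a
    have h := congrArg (fun z => z.2.1) (hx (a, 0, 0))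
    simp only [mul_def, ZMod.val_zero, zero_nsmul, add_zero, zero_add] at h
    exact add_eq_left.mp h
  have hdvd : n ∣ x.2.2.val := by
    have h := AddMonoid.exponent_dvd_of_forall_nsmul_eq_zero fun a =>
      Subtype.ext (by simpa using key a : ((x.2.2.val • a : A) : B) = 0)
    rwa [hexp] at h
  have hval : x.2.2.val = 0 := Nat.eq_zero_of_dvd_of_lt hdvd (ZMod.val_lt _)
  refine ⟨?_, (ZMod.val_eq_zero _).mp hval⟩
  have h := congrArg (fun z => z.2.1) (hx (0, 0, 1))
  simp only [mul_def, ZMod.val_one, one_nsmul, AddSubgroup.coe_zero, smul_zero,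
    add_zero, zero_add] at h
  exact Subtype.ext (by simpa using add_eq_right.mp h.symm)

lemma comm_eq (x y : A × B × ZMod n) :
    x * y * x⁻¹ * y⁻¹ =
      ((0 : A), x.2.2.val • (y.1 : B) - y.2.2.val • (x.1 : B), (0 : ZMod n)) := by
  have key : x * y =
      ((0 : A), x.2.2.val • (y.1 : B) - y.2.2.val • (x.1 : B), (0 : ZMod n)) * (y * x) := by
    refine Prod.ext ?_ (Prod.ext ?_ ?_)
    · show x.1 + y.1 = 0 + (y.1 + x.1); rw [zero_add, add_comm]
    · show x.2.1 + x.2.2.val • (y.1 : B) + y.2.1 =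
        (x.2.2.val • (y.1 : B) - y.2.2.val • (x.1 : B)) + (0 : ZMod n).val • ((y * x).1 : B) +
          (y.2.1 + y.2.2.val • (x.1 : B) + x.2.1)
      rw [ZMod.val_zero, zero_nsmul, add_zero]
      abel
    · show x.2.2 + y.2.2 = 0 + (y.2.2 + x.2.2); rw [zero_add, add_comm]
  calc x * y * x⁻¹ * y⁻¹ = (x * y) * (y * x)⁻¹ := by rw [mul_inv_rev, ← mul_assoc]
    _ = _ := by rw [key, mul_inv_cancel_right]

lemma phi_central {B' : Type*} [AddCommGroup B'] {n' : ℕ} [NeZero n'] {A' : AddSubgroup B'}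
    [BoundedSub A' n'] (hn' : 1 < n') (hexp' : AddMonoid.exponent A' = n')
    (φ : (A × B × ZMod n) ≃* (A' × B' × ZMod n')) (b : B) :
    φ ((0 : A), b, (0 : ZMod n)) =
      ((0 : A'), (φ ((0 : A), b, (0 : ZMod n))).2.1, (0 : ZMod n')) := by
  have hc : ∀ y, φ ((0 : A), b, (0 : ZMod n)) * y = y * φ ((0 : A), b, (0 : ZMod n)) := by
    intro y
    have := central_of (A := A) (n := n) b (φ.symm y)
    calc φ (0, b, 0) * y = φ ((0, b, 0) * φ.symm y) := by rw [map_mul, φ.apply_symm_apply]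
      _ = φ (φ.symm y * (0, b, 0)) := by rw [this]
      _ = y * φ (0, b, 0) := by rw [map_mul, φ.apply_symm_apply]
  obtain ⟨h1, h2⟩ := central_imp hn' hexp' hc
  exact Prod.ext h1 (Prod.ext rfl h2)

lemma phi_mem {B' : Type*} [AddCommGroup B'] {n' : ℕ} [NeZero n'] {A' : AddSubgroup B'}
    [BoundedSub A' n'] (hn : 1 < n)
    (φ : (A × B × ZMod n) ≃* (A' × B' × ZMod n')) {b : B} (hb : b ∈ A) :
    (φ ((0 : A), b, (0 : ZMod n))).2.1 ∈ A' := by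
  haveI : Fact (1 < n) := ⟨hn⟩
  set x : A × B × ZMod n := (0, 0, 1) with hx
  set y : A × B × ZMod n := (⟨b, hb⟩, 0, 0) with hy
  have hcomm : x * y * x⁻¹ * y⁻¹ = ((0 : A), b, (0 : ZMod n)) := by
    rw [comm_eq]
    refine Prod.ext rfl (Prod.ext ?_ rfl)
    show (1 : ZMod n).val • (b : B) - (0 : ZMod n).val • ((0 : A) : B) = b
    rw [ZMod.val_one, one_nsmul, ZMod.val_zero, zero_nsmul, sub_zero]
  have : φ ((0 : A), b, (0 : ZMod n)) = φ x * φ y * (φ x)⁻¹ * (φ y)⁻¹ := by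
    rw [← hcomm]; simp [map_mul]
  rw [this, comm_eq]
  exact A'.sub_mem (A'.nsmul_mem (SetLike.coe_mem _) _) (A'.nsmul_mem (SetLike.coe_mem _) _)

end Aux

/-- If the groups `G(A ⊆ B)` and `G(A' ⊆ B')` are isomorphic, then there is a group
isomorphism `f : B → B'` with `f(A) = A'`; that is, the embeddings `(A ⊆ B)` and
`(A' ⊆ B')` are isomorphic as subgroup embeddings. -/
theorem construction_reflects_iso (p m m' : ℕ) [Fact p.Prime] {B B' : Type*} [AddCommGroup B]
    [AddCommGroup B'] [Finite B] [Finite B']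
    (hpB : ∀ b : B, ∃ k : ℕ, p ^ k • b = 0) (hpB' : ∀ b : B', ∃ k : ℕ, p ^ k • b = 0)
    (A : AddSubgroup B) (A' : AddSubgroup B') (hA : A ≠ ⊥) (hA' : A' ≠ ⊥)
    [BoundedSub A (p ^ m)] [BoundedSub A' (p ^ m')]
    (hexp : AddMonoid.exponent A = p ^ m) (hexp' : AddMonoid.exponent A' = p ^ m')
    (h : Nonempty ((A × B × ZMod (p ^ m)) ≃* (A' × B' × ZMod (p ^ m')))) :
    ∃ f : B ≃+ B', A.map f.toAddMonoidHom = A' := by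
  obtain ⟨φ⟩ := h
  haveI : NeZero (p ^ m) := by infer_instance
  have hp1 : 1 < p := (Fact.out : p.Prime).one_lt
  -- 1 < p ^ m
  have hm0 : m ≠ 0 := by
    intro hm
    apply hA
    rw [AddSubgroup.eq_bot_iff_forall]
    intro a ha
    have := AddMonoid.exponent_nsmul_eq_zero (⟨a, ha⟩ : A)
    rw [hexp, hm, pow_zero, one_nsmul] at this
    simpa using congrArg Subtype.val this
  have hm'0 : m' ≠ 0 := by
    intro hm
    apply hA'
    rw [AddSubgroup.eq_bot_iff_forall]
    intro a ha
    have := AddMonoid.exponent_nsmul_eq_zero (⟨a, ha⟩ : A')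
    rw [hexp', hm, pow_zero, one_nsmul] at this
    simpa using congrArg Subtype.val this
  have hn : 1 < p ^ m := Nat.one_lt_pow hm0 hp1
  have hn' : 1 < p ^ m' := Nat.one_lt_pow hm'0 hp1
  set f : B → B' := fun b => (φ ((0 : A), b, (0 : ZMod (p ^ m)))).2.1 with hf
  set g : B' → B := fun b' => (φ.symm ((0 : A'), b', (0 : ZMod (p ^ m')))).2.1 with hg
  have hφ : ∀ b : B, φ ((0 : A), b, (0 : ZMod (p ^ m))) =
      ((0 : A'), f b, (0 : ZMod (p ^ m'))) := fun b => phi_central hn' hexp' φ b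
  have hφ' : ∀ b' : B', φ.symm ((0 : A'), b', (0 : ZMod (p ^ m'))) =
      ((0 : A), g b', (0 : ZMod (p ^ m))) := fun b' => phi_central hn hexp φ.symm b'
  have hgf : ∀ b : B, g (f b) = b := by
    intro b
    have : φ.symm ((0 : A'), f b, (0 : ZMod (p ^ m'))) = ((0 : A), b, (0 : ZMod (p ^ m))) := by
      rw [← hφ, φ.symm_apply_apply]
    simp [hg, this]
  have hfg : ∀ b' : B', f (g b') = b' := by
    intro b'
    have : φ ((0 : A), g b', (0 : ZMod (p ^ m))) = ((0 : A'), b', (0 : ZMod (p ^ m'))) := by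
      rw [← hφ', φ.apply_symm_apply]
    simp [hf, this]
  have hadd : ∀ b c : B, f (b + c) = f b + f c := by
    intro b c
    have hmul : ((0 : A), b, (0 : ZMod (p ^ m))) * ((0 : A), c, (0 : ZMod (p ^ m)))
        = ((0 : A), b + c, (0 : ZMod (p ^ m))) := by
      refine Prod.ext (zero_add _) (Prod.ext ?_ (zero_add _))
      show b + (0 : ZMod (p ^ m)).val • ((0 : A) : B) + c = b + c
      simp
    have := congrArg (fun z => z.2.1) (congrArg φ hmul.symm)
    simp only [map_mul, hφ] at this
    have hmul' : ((0 : A'), f b, (0 : ZMod (p ^ m'))) * ((0 : A'), f c, (0 : ZMod (p ^ m')))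
        = ((0 : A'), f b + f c, (0 : ZMod (p ^ m'))) := by
      refine Prod.ext (zero_add _) (Prod.ext ?_ (zero_add _))
      show f b + (0 : ZMod (p ^ m')).val • ((0 : A') : B') + f c = f b + f c
      simp
    rw [hmul'] at this
    exact this
  refine ⟨{ toFun := f, invFun := g, left_inv := hgf, right_inv := hfg, map_add' := hadd }, ?_⟩
  ext b'
  simp only [AddSubgroup.mem_map, AddEquiv.toAddMonoidHom_eq_coe, AddMonoidHom.coe_coe]
  constructor
  · rintro ⟨a, ha, rfl⟩
    exact phi_mem hn φ ha
  · intro hb'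
    refine ⟨g b', ?_, hfg b'⟩
    exact phi_mem hn' φ.symm hb'
end Metabelian
end

section
/- The p groups M_λ = G(A_λ ⊆ B), λ = 0,…,p−1, are pairwise nonisomorphic. Hence the number of isomorphism classes of metabelian groups of order p^{22} is at least p. -/
namespace Metabelian

variable {B : Type*} [AddCommGroup B]

/-! Birkhoff's example: `B = ℤ/p⁶ ⊕ ℤ/p⁴ ⊕ ℤ/p²` with generators `x, y, z`, and
`A_λ = ⟨p²x + py + z, p²y + pλz⟩`. -/

/-- `B = ℤ/p⁶ ⊕ ℤ/p⁴ ⊕ ℤ/p²`. -/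
abbrev Bb (p : ℕ) := ZMod (p ^ 6) × ZMod (p ^ 4) × ZMod (p ^ 2)

def xgen (p : ℕ) : Bb p := (1, 0, 0)
def ygen (p : ℕ) : Bb p := (0, 1, 0)
def zgen (p : ℕ) : Bb p := (0, 0, 1)

/-- `u = p²x + py + z`. -/
def ugen (p : ℕ) : Bb p := p ^ 2 • xgen p + p • ygen p + zgen p

/-- `v_λ = p²y + pλz`. -/
def vgen (p l : ℕ) : Bb p := p ^ 2 • ygen p + (p * l) • zgen p

/-- `A_λ = ⟨u, v_λ⟩`. -/
def Asub (p l : ℕ) : AddSubgroup (Bb p) := AddSubgroup.closure {ugen p, vgen p l}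

lemma ppow_zero (p n k : ℕ) (h : n ≤ k) : ((p : ZMod (p ^ n))) ^ k = 0 := by
  have h0 : ((p : ZMod (p ^ n))) ^ n = 0 := by rw [← Nat.cast_pow, ZMod.natCast_self]
  calc ((p : ZMod (p ^ n))) ^ k = (p : ZMod (p ^ n)) ^ n * (p : ZMod (p ^ n)) ^ (k - n) := by
        rw [← pow_add, Nat.add_sub_cancel' h]
    _ = 0 := by rw [h0, zero_mul]

instance Asub_bounded (p l : ℕ) [Fact p.Prime] : BoundedSub (Asub p l) (p ^ 4) := by
  constructor
  rintro ⟨a, ha⟩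
  simp only
  induction ha using AddSubgroup.closure_induction with
  | mem b hb =>
    rcases hb with rfl | rfl
    · show p ^ 4 • ugen p = 0
      simp only [ugen, xgen, ygen, zgen, smul_add, smul_smul, Prod.smul_mk, Prod.mk_add_mk,
        smul_zero, nsmul_eq_mul, Nat.cast_pow, mul_one, add_zero, zero_add, mul_zero]
      refine Prod.ext ?_ (Prod.ext ?_ ?_)
      · show (p : ZMod (p ^ 6)) ^ 4 * (p : ZMod (p ^ 6)) ^ 2 = 0
        rw [← pow_add]; exact ppow_zero p 6 6 le_rfl
      · show (p : ZMod (p ^ 4)) ^ 4 * (p : ZMod (p ^ 4)) = 0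
        rw [← pow_succ]; exact ppow_zero p 4 5 (by norm_num)
      · show (p : ZMod (p ^ 2)) ^ 4 = 0
        exact ppow_zero p 2 4 (by norm_num)
    · show p ^ 4 • vgen p l = 0
      simp only [vgen, ygen, zgen, smul_add, smul_smul, Prod.smul_mk, Prod.mk_add_mk,
        smul_zero, nsmul_eq_mul, Nat.cast_pow, Nat.cast_mul, mul_one, add_zero, zero_add,
        mul_zero]
      refine Prod.ext ?_ (Prod.ext ?_ ?_)
      · show (0 : ZMod (p ^ 6)) = 0
        rfl
      · show (p : ZMod (p ^ 4)) ^ 4 * (p : ZMod (p ^ 4)) ^ 2 = 0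
        rw [← pow_add]; exact ppow_zero p 4 6 (by norm_num)
      · show (p : ZMod (p ^ 2)) ^ 4 * ((p : ZMod (p ^ 2)) * l) = 0
        rw [ppow_zero p 2 4 (by norm_num), zero_mul]
  | zero => simp
  | add x y hx hy hx' hy' => simp [smul_add, hx', hy']
  | neg x hx hx' => simp [hx']


/-!
In `G(A ⊆ B)` the elements `(0, b, 0)` are central and `⁅(0, 0, 1), (a, 0, 0)⁆ = (0, a, 0)`, so the
commutator subgroup is `{(0, a, 0) | a ∈ A}` and lies in the center. If some `a ∈ A` has additive
order `n`, the center is exactly `{(0, b, 0)}`, so an isomorphism `G(A ⊆ B) ≃* G(A' ⊆ B)` induces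
an automorphism `φ` of `B` with `φ(A) ⊆ A'`.

For Birkhoff's subgroups, write `φ x`, `φ y`, `φ z` in coordinates. The orders of `y` and `z`
force some of these coordinates to be divisible by powers of `p`, the `z`-coordinate `c` of `φ z`
is a unit since `φ` is invertible, and comparing the coordinates of `φ u, φ v_λ ∈ A_λ'` modulo `p`
yields `c λ' ≡ c λ`.
-/

section SemidirectProduct

variable {A : AddSubgroup B} {n : ℕ} [NeZero n] [BoundedSub A n]

lemma mul_def_s11 (g h : A × B × ZMod n) :
    g * h = (g.1 + h.1, g.2.1 + g.2.2.val • (h.1 : B) + h.2.1, g.2.2 + h.2.2) := rfl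

lemma inv_def (g : A × B × ZMod n) :
    g⁻¹ = (-g.1, -g.2.1 + g.2.2.val • (g.1 : B), -g.2.2) := rfl

variable (A n) in
def centralHom : Multiplicative B →* A × B × ZMod n where
  toFun b := (0, b.toAdd, 0)
  map_one' := rfl
  map_mul' b b' := by simp [mul_def_s11]

lemma centralHom_apply (b : Multiplicative B) : centralHom A n b = (0, b.toAdd, 0) := rfl

lemma centralHom_injective : Function.Injective (centralHom A n) :=
  fun _ _ h => Multiplicative.toAdd.injective (congrArg (·.2.1) h)

lemma centralHom_mem_center (b : Multiplicative B) : centralHom A n b ∈ Subgroup.center _ :=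
  Subgroup.mem_center_iff.2 fun g => Prod.ext (add_comm _ _)
    (Prod.ext (by simp [mul_def_s11, centralHom_apply]; abel) (add_comm _ _))

lemma mul_mul_inv_mul_inv_eq_centralHom (g h : A × B × ZMod n) :
    g * h * g⁻¹ * h⁻¹ = centralHom A n (.ofAdd ↑(g.2.2.val • h.1 - h.2.2.val • g.1)) := by
  have hb := BoundedSub.bound (A := A) (n := n)
  rw [centralHom_apply]
  refine Prod.ext (by simp [mul_def_s11, inv_def])
    (Prod.ext ?_ (by simp [mul_def_s11, inv_def]))
  show g.2.1 + g.2.2.val • (h.1 : B) + h.2.1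
      + (g.2.2 + h.2.2).val • ((-g.1 : A) : B) + (-g.2.1 + g.2.2.val • (g.1 : B))
      + ((g.2.2 + h.2.2) + -g.2.2).val • ((-h.1 : A) : B)
      + (-h.2.1 + h.2.2.val • (h.1 : B))
      = ((g.2.2.val • h.1 - h.2.2.val • g.1 : A) : B)
  rw [add_neg_cancel_comm, ZMod.val_add, val_smul_eq _ (hb (-g.1)), add_nsmul]
  push_cast
  simp only [smul_neg]
  abel

lemma commutator_le_center : commutator (A × B × ZMod n) ≤ Subgroup.center _ := by
  rw [commutator_def, Subgroup.commutator_le]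
  intro g _ h _
  rw [commutatorElement_def, mul_mul_inv_mul_inv_eq_centralHom]
  exact centralHom_mem_center _


lemma eq_centralHom_of_mem_center (hn : 1 < n) {a₀ : A} (ha₀ : addOrderOf (a₀ : B) = n)
    {g : A × B × ZMod n} (hg : g ∈ Subgroup.center _) : g = centralHom A n (.ofAdd g.2.1) := by
  have : Fact (1 < n) := ⟨hn⟩
  have hcomm := Subgroup.mem_center_iff.1 hg
  have h₁ : g.1 = 0 := by
    have h := congrArg (·.2.1) (hcomm (0, 0, 1))
    simpa [mul_def_s11, ZMod.val_one] using h
  have h₂ : g.2.2 = 0 := by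
    have h := congrArg (·.2.1) (hcomm (a₀, 0, 0))
    simp only [mul_def_s11, ZMod.val_zero, zero_nsmul, add_zero, zero_add, left_eq_add] at h
    have hdvd := addOrderOf_dvd_of_nsmul_eq_zero h
    rw [ha₀] at hdvd
    rw [← ZMod.val_eq_zero]
    exact Nat.eq_zero_of_dvd_of_lt hdvd (ZMod.val_lt _)
  exact Prod.ext h₁ (Prod.ext rfl h₂)

lemma range_centralHom (hn : 1 < n) {a₀ : A} (ha₀ : addOrderOf (a₀ : B) = n) :
    (centralHom A n).range = Subgroup.center _ := by
  refine le_antisymm ?_ fun g hg => ⟨_, (eq_centralHom_of_mem_center hn ha₀ hg).symm⟩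
  rintro _ ⟨b, rfl⟩
  exact centralHom_mem_center b

noncomputable def centerEquiv (hn : 1 < n) {a₀ : A} (ha₀ : addOrderOf (a₀ : B) = n) :
    Multiplicative B ≃* Subgroup.center (A × B × ZMod n) :=
  (MonoidHom.ofInjective centralHom_injective).trans
    (MulEquiv.subgroupCongr (range_centralHom hn ha₀))

theorem exists_addEquiv_map_mem_of_mulEquiv {A' : AddSubgroup B} [BoundedSub A' n] (hn : 1 < n)
    {a₀ : A} (ha₀ : addOrderOf (a₀ : B) = n) {a₀' : A'} (ha₀' : addOrderOf (a₀' : B) = n)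
    (Ψ : A × B × ZMod n ≃* A' × B × ZMod n) : ∃ φ : B ≃+ B, ∀ a ∈ A, φ a ∈ A' := by
  let φ : B ≃+ B := AddEquiv.toMultiplicative.symm <|
    (centerEquiv hn ha₀).trans ((Subgroup.centerCongr Ψ).trans (centerEquiv hn ha₀').symm)
  have hφ (b : B) : Ψ (centralHom A n (.ofAdd b)) = centralHom A' n (.ofAdd (φ b)) :=
    congrArg Subtype.val ((centerEquiv hn ha₀').apply_symm_apply
      (Subgroup.centerCongr Ψ (centerEquiv hn ha₀ (.ofAdd b)))).symm
  refine ⟨φ, fun a ha => ?_⟩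
  have : Fact (1 < n) := ⟨hn⟩
  let g : A × B × ZMod n := (0, 0, 1)
  let h : A × B × ZMod n := (⟨a, ha⟩, 0, 0)
  have hgh : g * h * g⁻¹ * h⁻¹ = centralHom A n (.ofAdd a) := by
    simp [g, h, mul_mul_inv_mul_inv_eq_centralHom, ZMod.val_one]
  have key := hφ a
  rw [← hgh, map_mul, map_mul, map_mul, map_inv, map_inv, mul_mul_inv_mul_inv_eq_centralHom] at key
  rw [← Multiplicative.ofAdd.injective (centralHom_injective key)]
  exact SetLike.coe_mem _

end SemidirectProduct

lemma pow_dvd_of_pow_add_dvd_pow_mul {q x : ℤ} (hq : q ≠ 0) {a b : ℕ}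
    (h : q ^ (a + b) ∣ q ^ a * x) : q ^ b ∣ x :=
  (mul_dvd_mul_iff_left (pow_ne_zero a hq)).1 (by rwa [← pow_add])

/-- With `φ y = (b₁, b₂, b₃)`, `φ z = (c₁, c₂, c₃)` and `a₂, a₃` the last coordinates of `φ x`,
the divisibilities `hu₂ … hv₃` are the coordinates of `φ u = m u + n v_λ'` and
`φ v_λ = m' u + n' v_λ'`. Modulo `q` they give `m ≡ b₂ ≡ n' ≡ c₃` and `n' λ' ≡ λ c₃`. -/
lemma dvd_sub_of_congruences {q l l' a₂ a₃ b₁ b₂ b₃ c₁ c₂ c₃ m n m' n' : ℤ} (hq : Prime q)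
    (hb₁ : q ^ 2 ∣ b₁) (hc₁ : q ^ 4 ∣ c₁) (hc₂ : q ^ 2 ∣ c₂) (hc₃ : ¬ q ∣ c₃)
    (hu₂ : q ^ 4 ∣ q ^ 2 * a₂ + q * b₂ + c₂ - (m * q + n * q ^ 2))
    (hu₃ : q ^ 2 ∣ q ^ 2 * a₃ + q * b₃ + c₃ - (m + n * (q * l')))
    (hv₁ : q ^ 6 ∣ q ^ 2 * b₁ + q * l * c₁ - m' * q ^ 2)
    (hv₂ : q ^ 4 ∣ q ^ 2 * b₂ + q * l * c₂ - (m' * q + n' * q ^ 2))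
    (hv₃ : q ^ 2 ∣ q ^ 2 * b₃ + q * l * c₃ - (m' + n' * (q * l'))) :
    q ∣ l' - l := by
  have hq₀ := hq.ne_zero
  obtain ⟨B₁, rfl⟩ := hb₁
  obtain ⟨C₁, rfl⟩ := hc₁
  obtain ⟨C₂, rfl⟩ := hc₂
  have hm₂ : q ∣ b₂ - m := by
    rw [← mul_dvd_mul_iff_left hq₀, ← sq]
    exact (dvd_sub ((pow_dvd_pow q (by norm_num)).trans hu₂)
      (dvd_mul_right (q ^ 2) (a₂ + C₂ - n))).trans (dvd_of_eq (by ring))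
  have hm₃ : q ∣ c₃ - m :=
    (dvd_sub ((dvd_pow_self q two_ne_zero).trans hu₃)
      (dvd_mul_right q (q * a₃ + b₃ - n * l'))).trans (dvd_of_eq (by ring))
  obtain ⟨M', rfl⟩ : q ^ 2 ∣ m' := by
    have h : q ^ 4 ∣ q ^ 2 * B₁ + q ^ 3 * l * C₁ - m' := by
      rw [← mul_dvd_mul_iff_left (pow_ne_zero 2 hq₀), ← pow_add]
      exact hv₁.trans (dvd_of_eq (by ring))
    exact (dvd_sub (dvd_mul_right (q ^ 2) (B₁ + q * l * C₁))
      ((pow_dvd_pow q (by norm_num)).trans h)).trans (dvd_of_eq (by ring))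
  have hn₂ : q ∣ b₂ - n' := by
    rw [← mul_dvd_mul_iff_left (pow_ne_zero 2 hq₀), ← pow_succ]
    exact (dvd_sub ((pow_dvd_pow q (by norm_num)).trans hv₂)
      (dvd_mul_right (q ^ 3) (l * C₂ - M'))).trans (dvd_of_eq (by ring))
  have hn₃ : q ∣ l * c₃ - n' * l' := by
    rw [← mul_dvd_mul_iff_left hq₀, ← sq]
    exact (dvd_sub hv₃ (dvd_mul_right (q ^ 2) (b₃ - M'))).trans (dvd_of_eq (by ring))
  have h : q ∣ c₃ * (l' - l) :=
    (dvd_sub (((hm₃.add hm₂.neg_right).add hn₂).mul_left l') hn₃).trans (dvd_of_eq (by ring))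
  exact (hq.dvd_or_dvd h).resolve_left hc₃

section Example

variable {p : ℕ}

variable (p) in
def triple (i j k : ℤ) : Bb p := (i, j, k)

lemma triple_add (i j k i' j' k' : ℤ) :
    triple p i j k + triple p i' j' k' = triple p (i + i') (j + j') (k + k') := by
  simp [triple]

lemma zsmul_triple (m i j k : ℤ) : m • triple p i j k = triple p (m * i) (m * j) (m * k) := by
  simp [triple]

lemma triple_eq_triple_iff {i j k i' j' k' : ℤ} :
    triple p i j k = triple p i' j' k' ↔
      (p : ℤ) ^ 6 ∣ i' - i ∧ (p : ℤ) ^ 4 ∣ j' - j ∧ (p : ℤ) ^ 2 ∣ k' - k := by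
  simp [triple, Prod.ext_iff, ZMod.intCast_eq_intCast_iff_dvd_sub]

lemma triple_eq_zero_iff {i j k : ℤ} :
    triple p i j k = 0 ↔ (p : ℤ) ^ 6 ∣ i ∧ (p : ℤ) ^ 4 ∣ j ∧ (p : ℤ) ^ 2 ∣ k := by
  simp [triple, Prod.ext_iff, ZMod.intCast_zmod_eq_zero_iff_dvd]

lemma exists_triple (b : Bb p) : ∃ i j k : ℤ, b = triple p i j k := by
  obtain ⟨i, hi⟩ := ZMod.intCast_surjective b.1
  obtain ⟨j, hj⟩ := ZMod.intCast_surjective b.2.1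
  obtain ⟨k, hk⟩ := ZMod.intCast_surjective b.2.2
  exact ⟨i, j, k, by simp [triple, hi, hj, hk]⟩

lemma triple_eq_zsmul_add (i j k : ℤ) :
    triple p i j k = i • xgen p + j • ygen p + k • zgen p := by
  simp [triple, xgen, ygen, zgen]

lemma map_triple {F : Type*} [FunLike F (Bb p) (Bb p)] [AddMonoidHomClass F (Bb p) (Bb p)] (φ : F)
    {a₁ a₂ a₃ b₁ b₂ b₃ c₁ c₂ c₃ : ℤ} (hx : φ (xgen p) = triple p a₁ a₂ a₃)
    (hy : φ (ygen p) = triple p b₁ b₂ b₃) (hz : φ (zgen p) = triple p c₁ c₂ c₃) (i j k : ℤ) :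
    φ (triple p i j k) = triple p (i * a₁ + j * b₁ + k * c₁) (i * a₂ + j * b₂ + k * c₂)
      (i * a₃ + j * b₃ + k * c₃) := by
  rw [triple_eq_zsmul_add, map_add, map_add, map_zsmul, map_zsmul, map_zsmul, hx, hy, hz,
    zsmul_triple, zsmul_triple, zsmul_triple, triple_add, triple_add]

lemma ugen_eq : ugen p = triple p (p ^ 2) p 1 := by
  simp [ugen, triple, xgen, ygen, zgen]

lemma vgen_eq (l : ℕ) : vgen p l = triple p 0 (p ^ 2) (p * l) := by
  simp [vgen, triple, ygen, zgen]

lemma ygen_eq : ygen p = triple p 0 1 0 := by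
  simp [ygen, triple]

lemma zgen_eq : zgen p = triple p 0 0 1 := by
  simp [zgen, triple]

lemma pow_four_zsmul_ygen : ((p : ℤ) ^ 4) • ygen p = 0 := by
  rw [ygen_eq, zsmul_triple, triple_eq_zero_iff]
  simp

lemma sq_zsmul_zgen : ((p : ℤ) ^ 2) • zgen p = 0 := by
  rw [zgen_eq, zsmul_triple, triple_eq_zero_iff]
  simp

lemma zsmul_ugen_add_zsmul_vgen (l : ℕ) (m n : ℤ) :
    m • ugen p + n • vgen p l = triple p (m * p ^ 2) (m * p + n * p ^ 2) (m + n * (p * l)) := by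
  rw [ugen_eq, vgen_eq, zsmul_triple, zsmul_triple, triple_add]
  congr 1 <;> ring

lemma ugen_mem (l : ℕ) : ugen p ∈ Asub p l :=
  AddSubgroup.subset_closure (by simp)

lemma vgen_mem (l : ℕ) : vgen p l ∈ Asub p l :=
  AddSubgroup.subset_closure (by simp)

lemma mem_Asub_iff {l : ℕ} {b : Bb p} :
    b ∈ Asub p l ↔ ∃ m n : ℤ, triple p (m * p ^ 2) (m * p + n * p ^ 2) (m + n * (p * l)) = b := by
  simp only [Asub, AddSubgroup.mem_closure_pair, zsmul_ugen_add_zsmul_vgen]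

variable (p) in
noncomputable def pairHom (l : ℕ) : ZMod (p ^ 4) × ZMod (p ^ 2) →+ Bb p :=
  (ZMod.lift (p ^ 4) ⟨zmultiplesHom _ (ugen p), by
      rw [zmultiplesHom_apply, ugen_eq, zsmul_triple, triple_eq_zero_iff]
      push_cast
      exact ⟨⟨1, by ring⟩, ⟨p, by ring⟩, ⟨p ^ 2, by ring⟩⟩⟩).coprod
    (ZMod.lift (p ^ 2) ⟨zmultiplesHom _ (vgen p l), by
      rw [zmultiplesHom_apply, vgen_eq, zsmul_triple, triple_eq_zero_iff]
      push_cast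
      exact ⟨⟨0, by ring⟩, ⟨1, by ring⟩, ⟨p * l, by ring⟩⟩⟩)

lemma pairHom_intCast (l : ℕ) (m n : ℤ) :
    pairHom p l (m, n) = m • ugen p + n • vgen p l := by
  simp [pairHom, ZMod.lift_coe]

lemma range_pairHom (l : ℕ) : (pairHom p l).range = Asub p l := by
  ext b
  constructor
  · rintro ⟨⟨x, y⟩, rfl⟩
    obtain ⟨m, rfl⟩ := ZMod.intCast_surjective x
    obtain ⟨n, rfl⟩ := ZMod.intCast_surjective y
    rw [pairHom_intCast]
    exact add_mem (zsmul_mem (ugen_mem l) m) (zsmul_mem (vgen_mem l) n)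
  · intro hb
    obtain ⟨m, n, rfl⟩ := AddSubgroup.mem_closure_pair.1 hb
    exact ⟨(m, n), pairHom_intCast l m n⟩

variable [Fact p.Prime]

lemma pairHom_injective (l : ℕ) : Function.Injective (pairHom p l) := by
  have hp₀ : (p : ℤ) ≠ 0 := by exact_mod_cast (Fact.out : p.Prime).ne_zero
  refine (injective_iff_map_eq_zero _).2 ?_
  rintro ⟨x, y⟩ hxy
  obtain ⟨m, rfl⟩ := ZMod.intCast_surjective x
  obtain ⟨n, rfl⟩ := ZMod.intCast_surjective y
  rw [pairHom_intCast, zsmul_ugen_add_zsmul_vgen, triple_eq_zero_iff] at hxy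
  obtain ⟨h₁, h₂, -⟩ := hxy
  have hm : (p : ℤ) ^ 4 ∣ m := pow_dvd_of_pow_add_dvd_pow_mul hp₀ (by rwa [mul_comm] at h₁)
  have hn : (p : ℤ) ^ 2 ∣ n := pow_dvd_of_pow_add_dvd_pow_mul hp₀ <| by
    rw [mul_comm]
    exact (dvd_add_right (dvd_mul_of_dvd_left hm _)).1 h₂
  refine Prod.ext ((ZMod.intCast_zmod_eq_zero_iff_dvd _ _).2 ?_)
    ((ZMod.intCast_zmod_eq_zero_iff_dvd _ _).2 ?_) <;> push_cast <;> assumption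

lemma card_Asub (l : ℕ) : Nat.card (Asub p l) = p ^ 6 := by
  rw [← range_pairHom, ← Nat.card_congr (AddMonoidHom.ofInjective (pairHom_injective l)).toEquiv,
    Nat.card_prod, Nat.card_zmod, Nat.card_zmod, ← pow_add]

lemma addOrderOf_ugen : addOrderOf (ugen p) = p ^ 4 := by
  have h : pairHom p 0 (1, 0) = ugen p := by simpa using pairHom_intCast (p := p) 0 1 0
  rw [← h, addOrderOf_injective _ (pairHom_injective 0), Prod.addOrderOf, ZMod.addOrderOf_one,
    addOrderOf_zero, Nat.lcm_one_right]

lemma not_dvd_of_addEquiv (φ : Bb p ≃+ Bb p) {a₁ a₂ a₃ b₁ b₂ b₃ c₁ c₂ c₃ : ℤ}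
    (hx : φ (xgen p) = triple p a₁ a₂ a₃) (hy : φ (ygen p) = triple p b₁ b₂ b₃)
    (hz : φ (zgen p) = triple p c₁ c₂ c₃) : ¬ (p : ℤ) ∣ c₃ := by
  have hq : Prime (p : ℤ) := Nat.prime_iff_prime_int.1 Fact.out
  obtain ⟨w₁, w₂, w₃, hw⟩ := exists_triple (φ.symm (zgen p))
  have hpw := congrArg φ.symm sq_zsmul_zgen
  rw [map_zsmul, map_zero, hw, zsmul_triple, triple_eq_zero_iff] at hpw
  have hw₁ : (p : ℤ) ∣ w₁ := (dvd_pow_self _ four_ne_zero).trans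
    (pow_dvd_of_pow_add_dvd_pow_mul hq.ne_zero hpw.1)
  have hw₂ : (p : ℤ) ∣ w₂ := (dvd_pow_self _ two_ne_zero).trans
    (pow_dvd_of_pow_add_dvd_pow_mul hq.ne_zero hpw.2.1)
  have hφw := φ.apply_symm_apply (zgen p)
  rw [hw, map_triple φ hx hy hz, zgen_eq, triple_eq_triple_iff] at hφw
  intro hc
  refine hq.not_dvd_one (((dvd_pow_self _ two_ne_zero).trans hφw.2.2).add
    (((hw₁.mul_right a₃).add (hw₂.mul_right b₃)).add (hc.mul_left w₃)) |>.trans (dvd_of_eq ?_))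
  ring

theorem eq_of_addEquiv_map_mem {l l' : ℕ} (hl : l < p) (hl' : l' < p) (φ : Bb p ≃+ Bb p)
    (hφ : ∀ a ∈ Asub p l, φ a ∈ Asub p l') : l = l' := by
  have hq : Prime (p : ℤ) := Nat.prime_iff_prime_int.1 Fact.out
  obtain ⟨a₁, a₂, a₃, hx⟩ := exists_triple (φ (xgen p))
  obtain ⟨b₁, b₂, b₃, hy⟩ := exists_triple (φ (ygen p))
  obtain ⟨c₁, c₂, c₃, hz⟩ := exists_triple (φ (zgen p))
  have hb₁ : (p : ℤ) ^ 2 ∣ b₁ := by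
    have h := congrArg φ pow_four_zsmul_ygen
    rw [map_zsmul, map_zero, hy, zsmul_triple, triple_eq_zero_iff] at h
    exact pow_dvd_of_pow_add_dvd_pow_mul hq.ne_zero h.1
  obtain ⟨hc₁, hc₂⟩ : (p : ℤ) ^ 4 ∣ c₁ ∧ (p : ℤ) ^ 2 ∣ c₂ := by
    have h := congrArg φ sq_zsmul_zgen
    rw [map_zsmul, map_zero, hz, zsmul_triple, triple_eq_zero_iff] at h
    exact ⟨pow_dvd_of_pow_add_dvd_pow_mul hq.ne_zero h.1,
      pow_dvd_of_pow_add_dvd_pow_mul hq.ne_zero h.2.1⟩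
  obtain ⟨m, n, hu⟩ := mem_Asub_iff.1 (hφ _ (ugen_mem l))
  obtain ⟨m', n', hv⟩ := mem_Asub_iff.1 (hφ _ (vgen_mem l))
  rw [ugen_eq, map_triple φ hx hy hz, triple_eq_triple_iff] at hu
  rw [vgen_eq, map_triple φ hx hy hz, triple_eq_triple_iff] at hv
  simp only [one_mul, zero_mul, zero_add] at hu hv
  refine (Nat.modEq_iff_dvd.2 ?_).eq_of_lt_of_lt hl hl'
  exact dvd_sub_of_congruences hq hb₁ hc₁ hc₂ (not_dvd_of_addEquiv φ hx hy hz)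
    hu.2.1 hu.2.2 hv.1 hv.2.1 hv.2.2

end Example

/-- The groups `M_λ = G(A_λ ⊆ B)`, `λ = 0,…,p-1`, are pairwise nonisomorphic.  Hence the
number of isomorphism classes of metabelian groups of order `p²²` is at least `p`: there is
a family of `p` pairwise nonisomorphic metabelian groups of order `p²²`. -/
theorem birkhoff_theorem (p : ℕ) [Fact p.Prime] :
    (∀ l l' : ℕ, l < p → l' < p →
        Nonempty ((Asub p l × Bb p × ZMod (p ^ 4)) ≃* (Asub p l' × Bb p × ZMod (p ^ 4))) →
        l = l') ∧
    ∃ G : Fin p → Type, ∃ _ : ∀ i, Group (G i),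
      (∀ i, Nat.card (G i) = p ^ 22) ∧
      (∀ i, commutator (G i) ≤ Subgroup.center (G i)) ∧
      (∀ i j, i ≠ j → IsEmpty (G i ≃* G j)) := by
  have hp₄ : 1 < p ^ 4 := Nat.one_lt_pow four_ne_zero (Fact.out : p.Prime).one_lt
  have nonisomorphic (l l' : ℕ) (hl : l < p) (hl' : l' < p)
      (h : Nonempty ((Asub p l × Bb p × ZMod (p ^ 4)) ≃* (Asub p l' × Bb p × ZMod (p ^ 4)))) :
      l = l' := by
    obtain ⟨φ, hφ⟩ := exists_addEquiv_map_mem_of_mulEquiv hp₄ (a₀ := ⟨ugen p, ugen_mem l⟩)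
      addOrderOf_ugen (a₀' := ⟨ugen p, ugen_mem l'⟩) addOrderOf_ugen h.some
    exact eq_of_addEquiv_map_mem hl hl' φ hφ
  refine ⟨nonisomorphic, fun i => Asub p i × Bb p × ZMod (p ^ 4), fun _ => mgroup _ _,
    fun i => ?_, fun _ => commutator_le_center,
    fun i j hij => ⟨fun Ψ => hij (Fin.ext (nonisomorphic i j i.2 j.2 ⟨Ψ⟩))⟩⟩
  simp only [Nat.card_prod, card_Asub, Nat.card_zmod]
  ring
end Metabelian
end
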